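/- arXiv:quant-ph/0511013 — 6 statements merged into one kernel-verified Lean document; each statement's English description precedes it below -/
import Mathlib

section
/- If A is a positive semidefinite matrix and B is Hermitian, then Pos(A ⊗ B) = A ⊗ Pos(B), where Pos denotes the positive part of a Hermitian matrix and ⊗ is the Kronecker (tensor) product. -/
open scoped ComplexOrder

open Kronecker

/-!
Two decompositions `P - N = P' - N'` into positive semidefinite matrices with `P N = 0` and
`P' N' = 0` have the same absolute value: orthogonality gives `(P + N)² = (P - N)² = (P' + N')²`,
and positive semidefinite square roots are unique, so `P + N = P' + N'` and hence `P = P'`.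
For `B = Bp - Bn`, the pair `A ⊗ Bp`, `A ⊗ Bn` is such a decomposition of `A ⊗ B`.
-/

theorem add_sq_eq_sub_sq_of_mul_eq_zero {R : Type*} [Ring R] {a b : R}
    (hab : a * b = 0) (hba : b * a = 0) : (a + b) ^ 2 = (a - b) ^ 2 := by
  simp only [sq, add_mul, mul_add, sub_mul, mul_sub, hab, hba]
  abel

namespace Matrix

theorem kronecker_sub {α l m n p : Type*} [NonUnitalNonAssocRing α]
    (A : Matrix l m α) (B₁ B₂ : Matrix n p α) : A ⊗ₖ (B₁ - B₂) = A ⊗ₖ B₁ - A ⊗ₖ B₂ := by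
  ext
  simp [mul_sub]

theorem kronecker_mul_kronecker_eq_zero {α l m n p q r : Type*} [CommSemiring α] [Fintype m]
    [Fintype p] (A : Matrix l m α) (A' : Matrix m n α) {B : Matrix q p α} {B' : Matrix p r α}
    (h : B * B' = 0) : (A ⊗ₖ B) * (A' ⊗ₖ B') = 0 := by
  rw [← mul_kronecker_mul, h, kronecker_zero]

variable {ι 𝕜 : Type*} [Fintype ι] [RCLike 𝕜]

theorem PosSemidef.mul_eq_zero_symm {P N : Matrix ι ι 𝕜} (hP : P.PosSemidef)
    (hN : N.PosSemidef) (h : P * N = 0) : N * P = 0 := by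
  simpa [hP.isHermitian.eq, hN.isHermitian.eq] using congrArg (·ᴴ) h

theorem PosSemidef.eq_of_sub_eq_sub_of_mul_eq_zero [DecidableEq ι] {P N P' N' : Matrix ι ι 𝕜}
    (hP : P.PosSemidef) (hN : N.PosSemidef) (hP' : P'.PosSemidef) (hN' : N'.PosSemidef)
    (hPN : P * N = 0) (hPN' : P' * N' = 0) (h : P - N = P' - N') : P = P' := by
  have hsum : P + N = P' + N' := by
    open scoped MatrixOrder in
    refine (CFC.sq_eq_sq_iff _ _ (hP.add hN).nonneg (hP'.add hN').nonneg).mp ?_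
    rw [add_sq_eq_sub_sq_of_mul_eq_zero hPN (hP.mul_eq_zero_symm hN hPN),
      add_sq_eq_sub_sq_of_mul_eq_zero hPN' (hP'.mul_eq_zero_symm hN' hPN'), h]
  have hdouble : (2 : 𝕜) • P = (2 : 𝕜) • P' := by
    calc (2 : 𝕜) • P = (P + N) + (P - N) := by rw [two_smul]; abel
      _ = (P' + N') + (P' - N') := by rw [hsum, h]
      _ = (2 : 𝕜) • P' := by rw [two_smul]; abel
  exact smul_right_injective _ two_ne_zero hdouble

end Matrix

theorem stmt_1_general {n m : ℕ} (A : Matrix (Fin n) (Fin n) ℂ)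
    (B Bp Bn : Matrix (Fin m) (Fin m) ℂ)
    (hA : A.PosSemidef)
    (hBp : Bp.PosSemidef) (hBn : Bn.PosSemidef)
    (hdec : B = Bp - Bn) (horth : Bp * Bn = 0)
    (Cp Cn : Matrix (Fin n × Fin m) (Fin n × Fin m) ℂ)
    (hCp : Cp.PosSemidef) (hCn : Cn.PosSemidef)
    (hCdec : A ⊗ₖ B = Cp - Cn) (hCorth : Cp * Cn = 0) :
    Cp = A ⊗ₖ Bp := by
  refine hCp.eq_of_sub_eq_sub_of_mul_eq_zero hCn (hA.kronecker hBp) (hA.kronecker hBn) hCorth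
    (Matrix.kronecker_mul_kronecker_eq_zero A A horth) ?_
  rw [← hCdec, hdec, Matrix.kronecker_sub]

/-- If `A ⪰ 0` and `B` is Hermitian, then `Pos(A ⊗ B) = A ⊗ Pos(B)`:
given the positive-part decomposition `B = Bp - Bn` (PSD, orthogonal supports)
and any positive-part decomposition `A ⊗ B = Cp - Cn`, one has `Cp = A ⊗ Bp`. -/
theorem stmt_1 {n m : ℕ} (A : Matrix (Fin n) (Fin n) ℂ)
    (B Bp Bn : Matrix (Fin m) (Fin m) ℂ)
    (hA : A.PosSemidef) (hB : B.IsHermitian)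
    (hBp : Bp.PosSemidef) (hBn : Bn.PosSemidef)
    (hdec : B = Bp - Bn) (horth : Bp * Bn = 0)
    (Cp Cn : Matrix (Fin n × Fin m) (Fin n × Fin m) ℂ)
    (hCp : Cp.PosSemidef) (hCn : Cn.PosSemidef)
    (hCdec : A ⊗ₖ B = Cp - Cn) (hCorth : Cp * Cn = 0) :
    Cp = A ⊗ₖ Bp :=
  stmt_1_general A B Bp Bn hA hBp hBn hdec horth Cp Cn hCp hCn hCdec hCorth
end

section
/- If A and B are Hermitian matrices with A ⪯ B, then Tr[Pos(A)] ≤ Tr[Pos(B)]. -/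
/-!
Let `X` be the support projection of `Pos(A)`, so `0 ≤ X ≤ 1`, `X Pos(A) = Pos(A)` and
`X Neg(A) = 0`. Since `Tr[X M] ≥ 0` for `M ⪰ 0`,
`Tr Pos(A) = Tr[X A] ≤ Tr[X B] = Tr[X Pos(B)] - Tr[X Neg(B)] ≤ Tr[X Pos(B)] ≤ Tr Pos(B)`.
-/

open scoped ComplexOrder MatrixOrder

namespace Matrix

variable {𝕜 n : Type*} [RCLike 𝕜] [Fintype n] [DecidableEq n]

lemma trace_mul_nonneg {P Q : Matrix n n 𝕜} (hP : 0 ≤ P) (hQ : 0 ≤ Q) :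
    0 ≤ (P * Q).trace :=
  calc 0 ≤ (CFC.sqrt P * Q * CFC.sqrt P).trace :=
      (nonneg_iff_posSemidef.mp (conjugate_nonneg_of_nonneg hQ (CFC.sqrt_nonneg P))).trace_nonneg
    _ = (P * Q).trace := by rw [trace_mul_cycle, CFC.sqrt_mul_sqrt_self P hP]

lemma trace_mul_sub_le_trace {X P N : Matrix n n 𝕜} (hX₀ : 0 ≤ X) (hX₁ : X ≤ 1)
    (hP : 0 ≤ P) (hN : 0 ≤ N) : (X * (P - N)).trace ≤ P.trace :=
  calc (X * (P - N)).trace = (X * P).trace - (X * N).trace := by rw [mul_sub, trace_sub]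
    _ ≤ (X * P).trace := sub_le_self _ (trace_mul_nonneg hX₀ hN)
    _ ≤ (X * P).trace + ((1 - X) * P).trace :=
      le_add_of_nonneg_right (trace_mul_nonneg (sub_nonneg.2 hX₁) hP)
    _ = P.trace := by rw [← trace_add, ← add_mul, add_sub_cancel, one_mul]

/-- `X = P⁺ P` is the projection onto the range of `P`, where `P⁺ = cfc (·⁻¹) P` is the
pseudoinverse (recall `0⁻¹ = 0`). -/
lemma exists_trace_mul_sub_eq_trace {P N : Matrix n n 𝕜} (hP : 0 ≤ P) (hPN : P * N = 0) :
    ∃ X, 0 ≤ X ∧ X ≤ 1 ∧ (X * (P - N)).trace = P.trace := by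
  have hcont (f : ℝ → ℝ) : ContinuousOn f (spectrum ℝ P) :=
    finite_real_spectrum.continuousOn f
  have hX : cfc (fun x : ℝ => x⁻¹ * x) P = cfc (fun x : ℝ => x⁻¹) P * P := by
    rw [cfc_mul _ _ P (hcont _) (hcont _), cfc_id' ℝ P]
  have hXP : cfc (fun x : ℝ => x⁻¹ * x) P * P = P := by
    calc _ = cfc (fun x : ℝ => x⁻¹ * x * x) P := by
          rw [cfc_mul (fun x : ℝ => x⁻¹ * x) (fun x => x) P (hcont _) (hcont _), cfc_id' ℝ P]
      _ = P := by simp only [inv_mul_mul_self, cfc_id' ℝ P]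
  refine ⟨cfc (fun x : ℝ => x⁻¹ * x) P, cfc_nonneg fun x hx => ?_,
    cfc_le_one _ _ fun _ _ => inv_mul_le_one, ?_⟩
  · have : 0 ≤ x := spectrum_nonneg_of_nonneg hP hx
    positivity
  · rw [mul_sub, hXP, hX, mul_assoc _ P N, hPN, mul_zero, sub_zero]

end Matrix

open Matrix in
theorem stmt_2_general {n : ℕ} (A B Ap An Bp Bn : Matrix (Fin n) (Fin n) ℂ)
    (hAp : Ap.PosSemidef)
    (hAdec : A = Ap - An) (hAorth : Ap * An = 0)
    (hBp : Bp.PosSemidef) (hBn : Bn.PosSemidef)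
    (hBdec : B = Bp - Bn)
    (hAB : (B - A).PosSemidef) :
    Ap.trace.re ≤ Bp.trace.re := by
  obtain ⟨X, hX₀, hX₁, hXA⟩ := exists_trace_mul_sub_eq_trace hAp.nonneg hAorth
  have htrace : Ap.trace ≤ Bp.trace :=
    calc Ap.trace = (X * A).trace := by rw [hAdec, hXA]
      _ ≤ (X * B).trace := by
        rw [← sub_nonneg, ← trace_sub, ← mul_sub]
        exact trace_mul_nonneg hX₀ hAB.nonneg
      _ ≤ Bp.trace := hBdec ▸ trace_mul_sub_le_trace hX₀ hX₁ hBp.nonneg hBn.nonneg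
  exact (Complex.le_def.mp htrace).1

/-- If `A ⪯ B` (Hermitian matrices, Loewner order) then `Tr[Pos(A)] ≤ Tr[Pos(B)]`,
where `Pos` denotes the positive part in the decomposition into PSD matrices
with orthogonal supports. -/
theorem stmt_2 {n : ℕ} (A B Ap An Bp Bn : Matrix (Fin n) (Fin n) ℂ)
    (hA : A.IsHermitian) (hB : B.IsHermitian)
    (hAp : Ap.PosSemidef) (hAn : An.PosSemidef)
    (hAdec : A = Ap - An) (hAorth : Ap * An = 0)
    (hBp : Bp.PosSemidef) (hBn : Bn.PosSemidef)
    (hBdec : B = Bp - Bn) (hBorth : Bp * Bn = 0)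
    (hAB : (B - A).PosSemidef) :
    Ap.trace.re ≤ Bp.trace.re :=
  stmt_2_general A B Ap An Bp Bn hAp hAdec hAorth hBp hBn hBdec hAB
end

section
/- Let 0 ≤ ε < 1/2, z_b ≥ 0, 0 ≤ δ ≤ 1, and set z = 16·((1-ε)/(1-ε/2))·z_b + 4/(1-ε). Then (2-δ²)·((1-ε/2)z - 1)·(7 - 8(1-ε)z_b + (1-ε/2)z) - (1-δ²)·((1-ε/2)z - 1)² > 0. -/
/-- Scalar inequality (11) from the dual SDP analysis. -/
theorem stmt_6 (ε z_b δ z : ℝ) (hε0 : 0 ≤ ε) (hε1 : ε < 1/2) (hzb : 0 ≤ z_b)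
    (hδ0 : 0 ≤ δ) (hδ1 : δ ≤ 1)
    (hz : z = 16 * ((1 - ε) / (1 - ε/2)) * z_b + 4 / (1 - ε)) :
    0 < (2 - δ^2) * ((1 - ε/2) * z - 1) * (7 - 8 * (1 - ε) * z_b + (1 - ε/2) * z)
        - (1 - δ^2) * ((1 - ε/2) * z - 1)^2 := by
  have h1 : (0:ℝ) < 1 - ε := by linarith
  have h2 : (0:ℝ) < 1 - ε/2 := by linarith
  have hzz : (1 - ε/2) * z = 16 * (1-ε) * z_b + 4 * (1-ε/2) / (1-ε) := by
    have h2' : (2:ℝ) - ε ≠ 0 := by linarith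
    rw [hz]; field_simp
  have ht : 4 ≤ 4 * (1-ε/2) / (1-ε) := by
    rw [le_div_iff₀ h1]; nlinarith
  have hw : 0 ≤ (1-ε) * z_b := mul_nonneg h1.le hzb
  have hd : δ^2 ≤ 1 := by nlinarith
  have hd0 : 0 ≤ δ^2 := sq_nonneg δ
  have hA : 0 < 16*(1-ε)*z_b + 4 * (1-ε/2) / (1-ε) - 1 := by nlinarith
  have hS : 0 < 8*δ^2*((1-ε)*z_b) + 4 * (1-ε/2) / (1-ε) + 15 - 8*δ^2 := by nlinarith
  rw [hzz]
  nlinarith [mul_pos hA hS]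
end

section
/- Let ρ₀ = |ρ₀⟩⟨ρ₀| and ρ₁ = |ρ₁⟩⟨ρ₁| be rank-1 density matrices on a 2-dimensional space with |ρ₀⟩ = √(1-δ²)|ρ₁⟩ + δ|ρ₁⊥⟩ for some 0 ≤ δ ≤ 1, where ρ₁⊥ = I - ρ₁. Let 0 ≤ ε < 1/2 and z_b ≥ 0, and set z = 16·((1-ε)/(1-ε/2))·z_b + 4/(1-ε). Then 4δ²·ρ₁⊥·(1/2)(1+εz_b) ⪰ (1/4)[(1 + (ε/2)z)ρ₀ + (1 - (1-ε/2)z)ρ₁] as 2×2 Hermitian matrices. -/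
/-!
Write `s = √(1 - δ²)`, so `w = s v + δ u`, and `c₀ = 1 + εz/2`. The matrix splits as
`2δ²(1 + ε z_b) (1 - vv* - uu*) + A vv* + B (vu* + uv*) + C uu*`; the first summand is a
nonnegative multiple of an orthogonal projection, and the rest is positive semidefinite as soon as
`A, C ≥ 0` and `B² ≤ AC`. These three conditions all follow from the single scalar inequality
`c₀² ≤ ((1 - ε)z - 2)(8(1 + ε z_b) - c₀)`, which after multiplication by `((2 - ε)(1 - ε))²`
becomes a polynomial identity with a manifestly nonnegative right-hand side.
-/

open scoped ComplexOrder Matrix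

namespace Matrix

variable {n 𝕜 : Type*} [RCLike 𝕜]

lemma vecMulVec_smul_add_smul (s t : ℝ) (v u : n → 𝕜) :
    vecMulVec (s • v + t • u) (star (s • v + t • u)) =
      s ^ 2 • vecMulVec v (star v) + (s * t) • (vecMulVec v (star u) + vecMulVec u (star v)) +
        t ^ 2 • vecMulVec u (star u) := by
  ext i j
  simp only [vecMulVec_apply, smul_apply, add_apply, Pi.add_apply, Pi.smul_apply,
    Pi.star_apply, star_add, star_smul, RCLike.real_smul_eq_coe_mul, star_trivial]
  push_cast
  ring

variable [Fintype n]

lemma posSemidef_one_sub_vecMulVec_sub_vecMulVec [DecidableEq n] {v u : n → 𝕜}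
    (hv : star v ⬝ᵥ v = 1) (hu : star u ⬝ᵥ u = 1) (hvu : star v ⬝ᵥ u = 0) :
    (1 - vecMulVec v (star v) - vecMulVec u (star u)).PosSemidef := by
  have huv : star u ⬝ᵥ v = 0 := by rw [star_dotProduct, hvu, star_zero]
  set P := 1 - vecMulVec v (star v) - vecMulVec u (star u)
  have hP : Pᴴ = P := by simp [P, conjTranspose_vecMulVec]
  have hPP : P * P = P := by
    simp only [P, sub_mul, mul_sub, one_mul, mul_one, vecMulVec_mul_vecMulVec, hv, hu, hvu, huv,
      one_smul, zero_smul, vecMulVec_zero]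
    abel
  simpa only [hP, hPP] using posSemidef_conjTranspose_mul_self P

lemma posSemidef_smul_vecMulVec_add_smul_of_sq_le {a b c : ℝ} (ha : 0 ≤ a) (hc : 0 ≤ c)
    (hb : b ^ 2 ≤ a * c) (v u : n → 𝕜) :
    (a • vecMulVec v (star v) + b • (vecMulVec v (star u) + vecMulVec u (star v)) +
      c • vecMulVec u (star u)).PosSemidef := by
  rcases ha.eq_or_lt with rfl | ha
  · obtain rfl : b = 0 := by nlinarith
    simpa using (posSemidef_vecMulVec_self_star u).smul hc
  · set M := a • vecMulVec v (star v) + b • (vecMulVec v (star u) + vecMulVec u (star v)) +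
      c • vecMulVec u (star u)
    set x := a • v + b • u
    have hM : a • M = vecMulVec x (star x) + (a * c - b ^ 2) • vecMulVec u (star u) := by
      ext i j
      simp only [M, x, vecMulVec_apply, smul_apply, add_apply, Pi.add_apply, Pi.smul_apply,
        Pi.star_apply, star_add, star_smul, RCLike.real_smul_eq_coe_mul, star_trivial]
      push_cast
      ring
    rw [← inv_smul_smul₀ ha.ne' M, hM]
    exact ((posSemidef_vecMulVec_self_star x).add
      ((posSemidef_vecMulVec_self_star u).smul (by linarith))).smul (inv_nonneg.2 ha.le)

end Matrix

section Coefficients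

variable {ε z_b z : ℝ}

lemma four_le_one_sub_mul (hε1 : ε < 1 / 2) (hzb : 0 ≤ z_b)
    (hz : z = 16 * ((1 - ε) / (1 - ε / 2)) * z_b + 4 / (1 - ε)) :
    4 ≤ (1 - ε) * z := by
  have h : (1 - ε) * z = 16 * ((1 - ε) ^ 2 / (1 - ε / 2)) * z_b + 4 := by
    have : 1 - ε ≠ 0 := by linarith
    rw [hz]; field_simp
  have : 0 ≤ 16 * ((1 - ε) ^ 2 / (1 - ε / 2)) * z_b :=
    mul_nonneg (mul_nonneg (by norm_num) (div_nonneg (sq_nonneg _) (by linarith))) hzb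
  linarith

lemma sq_one_add_half_mul_le (hε1 : ε < 1 / 2) (hzb : 0 ≤ z_b)
    (hz : z = 16 * ((1 - ε) / (1 - ε / 2)) * z_b + 4 / (1 - ε)) :
    (1 + ε / 2 * z) ^ 2 ≤ ((1 - ε) * z - 2) * (8 * (1 + ε * z_b) - (1 + ε / 2 * z)) := by
  set P := (2 - ε) * (1 - ε)
  have hP : 0 < P := by nlinarith
  have hZ : P * z = 32 * (1 - ε) ^ 2 * z_b + 4 * (2 - ε) := by
    have : 1 - ε ≠ 0 := by linarith
    have : 2 - ε ≠ 0 := by linarith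
    rw [hz]; field_simp; ring
  have hcert : ((1 - ε) * z - 2) * (8 * (1 + ε * z_b) - (1 + ε / 2 * z)) * P ^ 2
      - (1 + ε / 2 * z) ^ 2 * P ^ 2
      = 16 * z_b * (2 - ε) * (1 - ε) ^ 2 * (17 * (1 - ε) ^ 2 - 3)
        + (2 - ε) ^ 2 * (17 * (1 - ε) ^ 2 - 4) := by
    -- the left side is `f (P z)` for a quadratic `f y = α y² + β y + γ`, and
    -- `f y - f Z = (y - Z) (α (y + Z) + β)`
    linear_combination
      ((-(1 - ε) * ε / 2 - ε ^ 2 / 4) * (P * z + 32 * (1 - ε) ^ 2 * z_b + 4 * (2 - ε))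
        + (1 - ε) * (8 * (1 + ε * z_b) - 1) * P) * hZ
  have h2ε : 0 ≤ 2 - ε := by linarith
  have h17 : 4 ≤ 17 * (1 - ε) ^ 2 := by nlinarith
  have hcert_nonneg : 0 ≤ 16 * z_b * (2 - ε) * (1 - ε) ^ 2 * (17 * (1 - ε) ^ 2 - 3)
      + (2 - ε) ^ 2 * (17 * (1 - ε) ^ 2 - 4) :=
    add_nonneg (mul_nonneg (by positivity) (by linarith)) (mul_nonneg (sq_nonneg _) (by linarith))
  exact le_of_mul_le_mul_right (by linarith) (pow_pos hP 2)

lemma coefficients_nonneg_and_sq_le_mul (hε0 : 0 ≤ ε) (hε1 : ε < 1 / 2) (hzb : 0 ≤ z_b)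
    (hz : z = 16 * ((1 - ε) / (1 - ε / 2)) * z_b + 4 / (1 - ε)) {δ s : ℝ}
    (hs : s ^ 2 = 1 - δ ^ 2) :
    0 ≤ -((1 + ε / 2 * z) * s ^ 2 + (1 - (1 - ε / 2) * z)) / 4 ∧
    0 ≤ δ ^ 2 * (8 * (1 + ε * z_b) - (1 + ε / 2 * z)) / 4 ∧
    (-((1 + ε / 2 * z) * (s * δ)) / 4) ^ 2 ≤
      -((1 + ε / 2 * z) * s ^ 2 + (1 - (1 - ε / 2) * z)) / 4 *
        (δ ^ 2 * (8 * (1 + ε * z_b) - (1 + ε / 2 * z)) / 4) := by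
  set c₀ := 1 + ε / 2 * z
  set D := (1 - ε) * z - 2
  set K := 8 * (1 + ε * z_b) - c₀
  have hD : 2 ≤ D := by linarith [four_le_one_sub_mul hε1 hzb hz]
  have hcore : c₀ ^ 2 ≤ D * K := sq_one_add_half_mul_le hε1 hzb hz
  have hz0 : 0 ≤ z := by nlinarith
  have hc₀ : 0 ≤ c₀ := add_nonneg zero_le_one (mul_nonneg (by linarith) hz0)
  have hK : 0 ≤ K := nonneg_of_mul_nonneg_right (hcore.trans' (sq_nonneg _)) (by linarith)
  have hδ : δ ^ 2 ≤ 1 := by nlinarith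
  have hA : -(c₀ * s ^ 2 + (1 - (1 - ε / 2) * z)) = D + c₀ * δ ^ 2 := by rw [hs]; ring
  rw [hA]
  refine ⟨by positivity, by positivity, ?_⟩
  calc (-(c₀ * (s * δ)) / 4) ^ 2 = c₀ ^ 2 * (1 - δ ^ 2) * δ ^ 2 / 16 := by rw [← hs]; ring
    _ ≤ D * K * δ ^ 2 / 16 := by
      gcongr ?_ * _ / _
      nlinarith [mul_nonneg (sq_nonneg c₀) (sq_nonneg δ)]
    _ ≤ (D + c₀ * δ ^ 2) / 4 * (δ ^ 2 * K / 4) := by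
      nlinarith [mul_nonneg hc₀ (mul_nonneg (sq_nonneg δ) hK)]

end Coefficients

open Matrix

/-- Inequality (6) of Claim 3.2: with `ρ₀ = |ρ₀⟩⟨ρ₀|`, `ρ₁ = |ρ₁⟩⟨ρ₁|` rank-1
density matrices on ℂ², `|ρ₀⟩ = √(1-δ²)|ρ₁⟩ + δ|ρ₁⊥⟩`, `ρ₁⊥ = I - ρ₁`, and
`z = 16((1-ε)/(1-ε/2))z_b + 4/(1-ε)`, one has
`4δ²·ρ₁⊥·(1/2)(1+εz_b) ⪰ (1/4)[(1+(ε/2)z)ρ₀ + (1-(1-ε/2)z)ρ₁]`. -/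
theorem stmt_9 (δ ε z_b z : ℝ)
    (hδ0 : 0 ≤ δ) (hδ1 : δ ≤ 1) (hε0 : 0 ≤ ε) (hε1 : ε < 1/2) (hzb : 0 ≤ z_b)
    (hz : z = 16 * ((1 - ε) / (1 - ε/2)) * z_b + 4 / (1 - ε))
    (v u : Fin 2 → ℂ)
    (hv : star v ⬝ᵥ v = 1) (hu : star u ⬝ᵥ u = 1) (hvu : star v ⬝ᵥ u = 0) :
    let ρ₁ : Matrix (Fin 2) (Fin 2) ℂ := Matrix.vecMulVec v (star v)
    let w : Fin 2 → ℂ := fun i => (Real.sqrt (1 - δ^2) : ℂ) * v i + (δ : ℂ) * u i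
    let ρ₀ : Matrix (Fin 2) (Fin 2) ℂ := Matrix.vecMulVec w (star w)
    let ρ₁perp : Matrix (Fin 2) (Fin 2) ℂ := 1 - ρ₁
    (((4 * δ^2 * ((1/2) * (1 + ε * z_b)) : ℝ) : ℂ) • ρ₁perp -
      (((1/4 : ℝ) : ℂ) • ((((1 + (ε/2) * z : ℝ)) : ℂ) • ρ₀ +
        (((1 - (1 - ε/2) * z : ℝ)) : ℂ) • ρ₁))).PosSemidef := by
  intro ρ₁ w ρ₀ ρ₁perp
  set s := √(1 - δ ^ 2)
  have hs : s ^ 2 = 1 - δ ^ 2 := Real.sq_sqrt (by nlinarith)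
  have hw : w = s • v + δ • u := by ext i; simp [w, s, Complex.real_smul]
  obtain ⟨hA, hC, hB⟩ := coefficients_nonneg_and_sq_le_mul hε0 hε1 hzb hz hs
  have hα : 0 ≤ 2 * δ ^ 2 * (1 + ε * z_b) := by positivity
  refine Eq.subst (motive := fun M : Matrix (Fin 2) (Fin 2) ℂ => M.PosSemidef) ?_
    (((posSemidef_one_sub_vecMulVec_sub_vecMulVec hv hu hvu).smul hα).add
      (posSemidef_smul_vecMulVec_add_smul_of_sq_le hA hC hB v u))
  simp only [ρ₁perp, ρ₀, ρ₁, hw, vecMulVec_smul_add_smul, Complex.coe_smul]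
  module
end

section
/- Let ρ₀, ρ₁ be rank-1 density matrices on a 2-dimensional space with |ρ₀⟩ = √(1-δ²)|ρ₁⟩ + δ|ρ₁⊥⟩, ρ₁⊥ = I - ρ₁, 0 ≤ ε < 1/2, z_b ≥ 0, and z = 16·((1-ε)/(1-ε/2))·z_b + 4/(1-ε). Then 4δ²·ρ₁⊥·(1/2)(1-(1-ε)z_b) ⪰ (1/4)(1 - (1-ε/2)z)(ρ₀ + ρ₁) as 2×2 Hermitian matrices. -/
/-!
Write `P y = y y*` and `w = s v + δ u` with `s = √(1 - δ²)`. In the basis `v, u` the quadratic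
form of `P v + P w` at `x` is `|p|² + |s p + δ q|²` with `p = ⟨v, x⟩`, `q = ⟨u, x⟩`, and since `|s| ≤ 1`,
`|δ q| ≤ |s p + δ q| + |p|`, so it dominates `δ² |q|² / 2`. Hence `a P u - c (P w + P v)` is positive
semidefinite as soon as `c ≤ 0` and `a - c δ² / 2 ≥ 0`, and `P u = 1 - P v` for an orthonormal pair.
For the coefficients of the claim, `(1 - ε/2) z = 16 (1 - ε) z_b + 2 + 2 / (1 - ε)`, so the
second condition reads `δ² (17 + 2 / (1 - ε)) / 8 ≥ 0`: the `z_b` terms cancel exactly.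
-/

open scoped ComplexOrder Matrix

open Matrix

theorem sq_norm_mul_sq_norm_le_of_norm_le_one {𝕜 E : Type*} [NormedField 𝕜]
    [SeminormedAddCommGroup E] [NormedSpace 𝕜 E] {s : 𝕜} (hs : ‖s‖ ≤ 1) (δ : 𝕜) (p q : E) :
    ‖δ‖ ^ 2 * ‖q‖ ^ 2 ≤ 2 * (‖p‖ ^ 2 + ‖s • p + δ • q‖ ^ 2) := by
  have hsp : ‖s • p‖ ≤ ‖p‖ := by
    rw [norm_smul]
    exact mul_le_of_le_one_left (norm_nonneg p) hs
  have htri : ‖δ • q‖ ≤ ‖s • p + δ • q‖ + ‖s • p‖ := by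
    simpa using norm_sub_le (s • p + δ • q) (s • p)
  rw [← mul_pow, ← norm_smul]
  nlinarith [norm_nonneg (δ • q), norm_nonneg (s • p), sq_nonneg (‖p‖ - ‖s • p + δ • q‖)]

theorem Matrix.sum_vecMulVec_star_eq_one {R ι : Type*} [CommRing R] [StarRing R] [Fintype ι]
    [DecidableEq ι] {b : ι → ι → R} (hb : ∀ i j, star (b i) ⬝ᵥ b j = (1 : Matrix ι ι R) i j) :
    ∑ i, vecMulVec (b i) (star (b i)) = 1 := by
  have hM : (of b)ᵀᴴ * (of b)ᵀ = 1 := by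
    ext i j
    simpa [mul_apply, dotProduct] using hb i j
  rw [← mul_eq_one_comm.mp hM]
  ext k l
  simp [mul_apply, vecMulVec_apply, Matrix.sum_apply]

theorem Matrix.vecMulVec_add_vecMulVec_star_eq_one {R : Type*} [CommRing R] [StarRing R]
    {v u : Fin 2 → R} (hv : star v ⬝ᵥ v = 1) (hu : star u ⬝ᵥ u = 1) (hvu : star v ⬝ᵥ u = 0) :
    vecMulVec v (star v) + vecMulVec u (star u) = 1 := by
  have huv : star u ⬝ᵥ v = 0 := by rw [star_dotProduct, hvu, star_zero]
  simpa [Fin.sum_univ_two] using sum_vecMulVec_star_eq_one (b := ![v, u]) (by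
    intro i j
    fin_cases i <;> fin_cases j <;> simp [hv, hu, hvu, huv])

section RCLike

variable {𝕜 : Type*} [RCLike 𝕜] {n : Type*} [Fintype n]

theorem Matrix.star_dotProduct_vecMulVec_self_star_mulVec (x y : n → 𝕜) :
    star x ⬝ᵥ (vecMulVec y (star y) *ᵥ x) = ((‖star y ⬝ᵥ x‖ ^ 2 : ℝ) : 𝕜) := by
  rw [vecMulVec_mulVec, dotProduct_smul, op_smul_eq_mul, star_dotProduct, RCLike.star_def,
    RCLike.conj_mul]
  norm_cast

theorem Matrix.posSemidef_vecMulVec_add_vecMulVec_sub {s : 𝕜} (hs : ‖s‖ ≤ 1) (δ : 𝕜)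
    (v u : n → 𝕜) :
    (vecMulVec v (star v) + vecMulVec (s • v + δ • u) (star (s • v + δ • u)) -
      ((‖δ‖ ^ 2 / 2 : ℝ) : 𝕜) • vecMulVec u (star u)).PosSemidef := by
  refine .of_dotProduct_mulVec_nonneg ?_ fun x => ?_
  · exact ((posSemidef_vecMulVec_self_star v).isHermitian.add
      (posSemidef_vecMulVec_self_star _).isHermitian).sub
      ((posSemidef_vecMulVec_self_star u).isHermitian.smul (RCLike.conj_ofReal _))
  · have hw : star (s • v + δ • u) ⬝ᵥ x = star s * (star v ⬝ᵥ x) + star δ * (star u ⬝ᵥ x) := by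
      simp [star_add, star_smul, add_dotProduct, smul_dotProduct]
    have hnorm := sq_norm_mul_sq_norm_le_of_norm_le_one (s := star s) (by simpa using hs)
      (star δ) (star v ⬝ᵥ x) (star u ⬝ᵥ x)
    rw [norm_star, smul_eq_mul, smul_eq_mul] at hnorm
    rw [sub_mulVec, add_mulVec, smul_mulVec, dotProduct_sub, dotProduct_add, dotProduct_smul,
      star_dotProduct_vecMulVec_self_star_mulVec, star_dotProduct_vecMulVec_self_star_mulVec,
      star_dotProduct_vecMulVec_self_star_mulVec, hw, smul_eq_mul, ← RCLike.ofReal_add,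
      ← RCLike.ofReal_mul, ← RCLike.ofReal_sub, RCLike.ofReal_nonneg]
    linarith

theorem Matrix.posSemidef_smul_vecMulVec_sub_smul {s : 𝕜} (hs : ‖s‖ ≤ 1) (δ : 𝕜)
    (v u : n → 𝕜) {a c : ℝ} (hc : c ≤ 0) (hac : 0 ≤ a - c * (‖δ‖ ^ 2 / 2)) :
    ((a : 𝕜) • vecMulVec u (star u) - (c : 𝕜) •
      (vecMulVec (s • v + δ • u) (star (s • v + δ • u)) + vecMulVec v (star v))).PosSemidef := by
  have hdecomp : (a : 𝕜) • vecMulVec u (star u) - (c : 𝕜) •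
      (vecMulVec (s • v + δ • u) (star (s • v + δ • u)) + vecMulVec v (star v)) =
      ((-c : ℝ) : 𝕜) • (vecMulVec v (star v) + vecMulVec (s • v + δ • u) (star (s • v + δ • u)) -
        ((‖δ‖ ^ 2 / 2 : ℝ) : 𝕜) • vecMulVec u (star u)) +
      ((a - c * (‖δ‖ ^ 2 / 2) : ℝ) : 𝕜) • vecMulVec u (star u) := by
    push_cast
    module
  rw [hdecomp]
  exact ((posSemidef_vecMulVec_add_vecMulVec_sub hs δ v u).smul
    (RCLike.ofReal_nonneg.mpr (neg_nonneg.mpr hc))).add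
    ((posSemidef_vecMulVec_self_star u).smul (RCLike.ofReal_nonneg.mpr hac))

end RCLike

lemma one_sub_half_mul_eq {ε z_b z : ℝ} (hε : ε < 1)
    (hz : z = 16 * ((1 - ε) / (1 - ε/2)) * z_b + 4 / (1 - ε)) :
    (1 - ε/2) * z = 16 * (1 - ε) * z_b + 2 + 2 / (1 - ε) := by
  have h1 : 1 - ε ≠ 0 := by linarith
  have h2 : 2 - ε ≠ 0 := by linarith
  rw [hz]
  field_simp
  ring

theorem stmt_10_general (δ ε z_b z : ℝ)
    (hε1 : ε < 1/2) (hzb : 0 ≤ z_b)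
    (hz : z = 16 * ((1 - ε) / (1 - ε/2)) * z_b + 4 / (1 - ε))
    (v u : Fin 2 → ℂ)
    (hv : star v ⬝ᵥ v = 1) (hu : star u ⬝ᵥ u = 1) (hvu : star v ⬝ᵥ u = 0) :
    let ρ₁ : Matrix (Fin 2) (Fin 2) ℂ := Matrix.vecMulVec v (star v)
    let w : Fin 2 → ℂ := fun i => (Real.sqrt (1 - δ^2) : ℂ) * v i + (δ : ℂ) * u i
    let ρ₀ : Matrix (Fin 2) (Fin 2) ℂ := Matrix.vecMulVec w (star w)
    let ρ₁perp : Matrix (Fin 2) (Fin 2) ℂ := 1 - ρ₁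
    (((4 * δ^2 * ((1/2) * (1 - (1 - ε) * z_b)) : ℝ) : ℂ) • ρ₁perp -
      (((1/4 * (1 - (1 - ε/2) * z) : ℝ) : ℂ) • (ρ₀ + ρ₁))).PosSemidef := by
  intro ρ₁ w ρ₀ ρ₁perp
  have hz' := one_sub_half_mul_eq (by linarith) hz
  have hquot : 0 ≤ 2 / (1 - ε) := div_nonneg zero_le_two (by linarith)
  have hc : 1/4 * (1 - (1 - ε/2) * z) ≤ 0 := by
    nlinarith [mul_nonneg (by linarith : 0 ≤ 1 - ε) hzb]
  have hac : 0 ≤ 4 * δ^2 * ((1/2) * (1 - (1 - ε) * z_b)) -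
      1/4 * (1 - (1 - ε/2) * z) * (‖(δ : ℂ)‖ ^ 2 / 2) := by
    rw [Complex.norm_real, Real.norm_eq_abs, sq_abs]
    have : 4 * δ^2 * ((1/2) * (1 - (1 - ε) * z_b)) - 1/4 * (1 - (1 - ε/2) * z) * (δ ^ 2 / 2) =
        δ ^ 2 * (17 + 2 / (1 - ε)) / 8 := by
      linear_combination (δ ^ 2 / 8) * hz'
    rw [this]
    positivity
  have hs : ‖((Real.sqrt (1 - δ^2) : ℝ) : ℂ)‖ ≤ 1 := by
    rw [Complex.norm_real, Real.norm_of_nonneg (Real.sqrt_nonneg _)]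
    exact Real.sqrt_le_one.mpr (by nlinarith)
  have hperp : ρ₁perp = vecMulVec u (star u) :=
    sub_eq_of_eq_add' (vecMulVec_add_vecMulVec_star_eq_one hv hu hvu).symm
  rw [hperp]
  exact posSemidef_smul_vecMulVec_sub_smul hs (δ : ℂ) v u hc hac

/-- Inequality (7) of Claim 3.2: with the same setup,
`4δ²·ρ₁⊥·(1/2)(1-(1-ε)z_b) ⪰ (1/4)(1-(1-ε/2)z)(ρ₀+ρ₁)`. -/
theorem stmt_10 (δ ε z_b z : ℝ)
    (hδ0 : 0 ≤ δ) (hδ1 : δ ≤ 1) (hε0 : 0 ≤ ε) (hε1 : ε < 1/2) (hzb : 0 ≤ z_b)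
    (hz : z = 16 * ((1 - ε) / (1 - ε/2)) * z_b + 4 / (1 - ε))
    (v u : Fin 2 → ℂ)
    (hv : star v ⬝ᵥ v = 1) (hu : star u ⬝ᵥ u = 1) (hvu : star v ⬝ᵥ u = 0) :
    let ρ₁ : Matrix (Fin 2) (Fin 2) ℂ := Matrix.vecMulVec v (star v)
    let w : Fin 2 → ℂ := fun i => (Real.sqrt (1 - δ^2) : ℂ) * v i + (δ : ℂ) * u i
    let ρ₀ : Matrix (Fin 2) (Fin 2) ℂ := Matrix.vecMulVec w (star w)
    let ρ₁perp : Matrix (Fin 2) (Fin 2) ℂ := 1 - ρ₁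
    (((4 * δ^2 * ((1/2) * (1 - (1 - ε) * z_b)) : ℝ) : ℂ) • ρ₁perp -
      (((1/4 * (1 - (1 - ε/2) * z) : ℝ) : ℂ) • (ρ₀ + ρ₁))).PosSemidef :=
  stmt_10_general δ ε z_b z hε1 hzb hz v u hv hu hvu
end

section
/- Let b : E → ℝ≥0 be a function on the edge set E of a graph on [n] with |E| ≤ n²/4, and suppose that for every forest F ⊆ E, ∑_{e∈F} b(e) ≤ C·q. Then ∑_{e∈E} b(e)² ≤ C'·q²·log n for some constant C' depending only on C. -/
/-!
Order the edges by weight. The `ℓ` heaviest edges contain a forest with at least `√(ℓ / 2)`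
edges, each of weight at least the `ℓ`-th largest weight `b_ℓ`, so `b_ℓ² ℓ ≤ 2 (Cq)²`. Summing over
`ℓ ≤ n²` gives `∑ b_ℓ² ≤ 2 (Cq)² H_{n²} = O(q² log n)`.
-/

open scoped Classical

open Finset

namespace SimpleGraph

variable {V : Type*}

theorem isAcyclic_of_adj_unique {G : SimpleGraph V}
    (h : ∀ ⦃v w w' : V⦄, G.Adj v w → G.Adj v w' → w = w') : G.IsAcyclic := by
  intro u c hc
  have hnil : ¬c.Nil := hc.not_nil
  exact hc.snd_ne_penultimate (h (c.adj_snd hnil) (c.adj_penultimate hnil).symm)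

theorem isAcyclic_fromEdgeSet_of_forall_mem {s : Set (Sym2 V)} {r : V} (h : ∀ e ∈ s, r ∈ e) :
    (fromEdgeSet s).IsAcyclic :=
  (isAcyclic_starGraph r).anti fun v w hvw => by
    rw [fromEdgeSet_adj] at hvw
    have hr := h _ hvw.1
    rw [Sym2.mem_iff] at hr
    rw [starGraph_adj]
    exact ⟨hvw.2, hr.imp Eq.symm Eq.symm⟩

def PairwiseVertexDisjoint (M : Set (Sym2 V)) : Prop :=
  M.Pairwise fun e f => ∀ x ∈ e, x ∉ f

theorem isAcyclic_fromEdgeSet_of_pairwiseVertexDisjoint {M : Set (Sym2 V)}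
    (hM : PairwiseVertexDisjoint M) : (fromEdgeSet M).IsAcyclic :=
  isAcyclic_of_adj_unique fun v w w' h h' => by
    rw [fromEdgeSet_adj] at h h'
    by_contra hne
    exact hM h.1 h'.1 (fun heq => hne (Sym2.congr_right.1 heq)) v
      (Sym2.mem_mk_left _ _) (Sym2.mem_mk_left _ _)

theorem exists_pairwiseVertexDisjoint_subset_forall_exists_mem (t : Finset (Sym2 V)) :
    ∃ M ⊆ t, PairwiseVertexDisjoint (M : Set (Sym2 V)) ∧ ∀ e ∈ t, ∃ f ∈ M, ∃ x ∈ e, x ∈ f := by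
  obtain ⟨M, hM, hmax⟩ := exists_max_image
    (t.powerset.filter fun M : Finset (Sym2 V) => PairwiseVertexDisjoint (M : Set (Sym2 V))) card
    ⟨∅, mem_filter.2 ⟨empty_mem_powerset t, by simp [PairwiseVertexDisjoint]⟩⟩
  rw [mem_filter, mem_powerset] at hM
  refine ⟨M, hM.1, hM.2, fun e he => ?_⟩
  by_contra! hfree
  have heM : e ∉ M := fun h => hfree e h _ (Sym2.out_fst_mem e) (Sym2.out_fst_mem e)
  have hins := hmax (insert e M) <| by
    rw [mem_filter, mem_powerset, PairwiseVertexDisjoint, coe_insert, Set.pairwise_insert]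
    exact ⟨insert_subset he hM.1, hM.2,
      fun f hf _ => ⟨hfree f hf, fun x hxf hxe => hfree f hf x hxe hxf⟩⟩
  rw [card_insert_of_notMem heM] at hins
  omega

/-- A matching `M` maximal in `t` is covered by the at most `2 #M` stars at its vertices, so either
`M` or one of these stars is a forest with at least `√(#t / 2)` edges. -/
theorem exists_subset_isAcyclic_fromEdgeSet_card_le_two_mul_sq (t : Finset (Sym2 V)) :
    ∃ u ⊆ t, (fromEdgeSet (u : Set (Sym2 V))).IsAcyclic ∧ #t ≤ 2 * #u ^ 2 := by
  obtain ⟨M, hMt, hM, hcover⟩ := exists_pairwiseVertexDisjoint_subset_forall_exists_mem t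
  set star : V → Finset (Sym2 V) := fun r => {e ∈ t | r ∈ e}
  set W := M.biUnion Sym2.toFinset
  have hW : #W ≤ #M * 2 := card_biUnion_le_card_mul _ _ _ fun f _ => by
    rw [Sym2.card_toFinset]; split_ifs <;> omega
  have ht : t ⊆ W.biUnion star := fun e he => by
    obtain ⟨f, hf, x, hxe, hxf⟩ := hcover e he
    exact mem_biUnion.2 ⟨x, mem_biUnion.2 ⟨f, hf, Sym2.mem_toFinset.2 hxf⟩, mem_filter.2 ⟨he, hxe⟩⟩
  rcases W.eq_empty_or_nonempty with hW0 | hWne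
  · refine ⟨∅, empty_subset _, by simp, ?_⟩
    simpa [hW0] using ht
  obtain ⟨r, -, hr⟩ := exists_max_image W (fun r => #(star r)) hWne
  have htcard : #t ≤ #M * 2 * #(star r) := calc
    #t ≤ #(W.biUnion star) := card_le_card ht
    _ ≤ #W * #(star r) := card_biUnion_le_card_mul _ _ _ hr
    _ ≤ #M * 2 * #(star r) := Nat.mul_le_mul_right _ hW
  rcases le_total #M #(star r) with h | h
  · exact ⟨star r, filter_subset _ _,
      isAcyclic_fromEdgeSet_of_forall_mem fun e he => (mem_filter.1 he).2, by nlinarith⟩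
  · exact ⟨M, hMt, isAcyclic_fromEdgeSet_of_pairwiseVertexDisjoint hM, by nlinarith⟩

theorem sq_mul_card_le_of_forall_isAcyclic [Fintype V] {G : SimpleGraph V} {b : Sym2 V → ℝ}
    {K : ℝ} (hF : ∀ F ≤ G, F.IsAcyclic → ∑ e ∈ univ.filter (· ∈ F.edgeSet), b e ≤ K)
    {t : Finset (Sym2 V)} (ht : (t : Set (Sym2 V)) ⊆ G.edgeSet) {β : ℝ} (hβ : 0 ≤ β)
    (hβt : ∀ e ∈ t, β ≤ b e) : β ^ 2 * #t ≤ 2 * K ^ 2 := by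
  obtain ⟨u, hut, hacyc, hcard⟩ := exists_subset_isAcyclic_fromEdgeSet_card_le_two_mul_sq t
  have hle : fromEdgeSet (u : Set (Sym2 V)) ≤ G := fun v w h => by
    rw [fromEdgeSet_adj] at h
    exact ht (hut h.1)
  have hu : β * #u ≤ K := calc
    β * #u ≤ ∑ e ∈ u, b e := by
      rw [mul_comm, ← nsmul_eq_mul]
      exact card_nsmul_le_sum u b β fun e he => hβt e (hut he)
    _ ≤ K := by
      convert hF _ hle hacyc using 2
      ext e
      simp only [mem_filter, mem_univ, true_and, edgeSet_fromEdgeSet, Set.mem_sdiff, mem_coe,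
        iff_self_and]
      exact fun he => G.not_isDiag_of_mem_edgeSet (ht (hut he))
  have hcard' : (#t : ℝ) ≤ 2 * #u ^ 2 := by exact_mod_cast hcard
  calc β ^ 2 * #t ≤ β ^ 2 * (2 * #u ^ 2) := by gcongr
    _ = 2 * (β * #u) ^ 2 := by ring
    _ ≤ 2 * K ^ 2 := by gcongr

end SimpleGraph

/-- Removing an element of least weight, which is counted with all `#s` elements, reduces `#s` by
one and costs at most `K / #s`. -/
theorem sum_le_mul_harmonic_of_mul_card_le {ι : Type*} (f : ι → ℝ) (K : ℝ) (s : Finset ι)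
    (hf : ∀ e ∈ s, 0 ≤ f e) (h : ∀ e ∈ s, f e * #{e' ∈ s | f e ≤ f e'} ≤ K) :
    ∑ e ∈ s, f e ≤ K * harmonic #s := by
  induction s using Finset.strongInduction with
  | H s ih =>
  rcases s.eq_empty_or_nonempty with rfl | hs
  · simp
  obtain ⟨e₀, he₀, hmin⟩ := s.exists_min_image f hs
  have hfirst : f e₀ * #s ≤ K := by
    simpa [filter_true_of_mem hmin] using h e₀ he₀
  have hrest := ih (s.erase e₀) (erase_ssubset he₀) (fun e he => hf e (mem_of_mem_erase he))
    fun e he => le_trans (mul_le_mul_of_nonneg_left (by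
      exact_mod_cast card_le_card (filter_subset_filter _ (erase_subset e₀ s)))
      (hf e (mem_of_mem_erase he))) (h e (mem_of_mem_erase he))
  rw [← add_sum_erase s f he₀, ← card_erase_add_one he₀, harmonic_succ]
  rw [← card_erase_add_one he₀] at hfirst
  push_cast at hfirst ⊢
  have hpos : (0 : ℝ) < #(s.erase e₀) + 1 := by positivity
  have hle : f e₀ ≤ K / (#(s.erase e₀) + 1) := by rw [le_div_iff₀ hpos]; linarith
  rw [mul_add, ← div_eq_mul_inv]
  linarith

theorem harmonic_le_mul_log_of_le_sq {m n : ℕ} (hn : 2 ≤ n) (hm : m ≤ n ^ 2) :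
    (harmonic m : ℝ) ≤ (2 + 1 / Real.log 2) * Real.log n := by
  have hlog2 : 0 < Real.log 2 := Real.log_pos one_lt_two
  have hlogn : Real.log 2 ≤ Real.log n := Real.log_le_log two_pos (by exact_mod_cast hn)
  have hlogm : Real.log m ≤ 2 * Real.log n := by
    rcases m.eq_zero_or_pos with rfl | hm0
    · simp only [Nat.cast_zero, Real.log_zero]; linarith
    · rw [← Nat.cast_ofNat, ← Real.log_pow]
      exact Real.log_le_log (by exact_mod_cast hm0) (by exact_mod_cast hm)
  have hone : 1 ≤ 1 / Real.log 2 * Real.log n := by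
    rw [one_div_mul_eq_div, le_div_iff₀ hlog2]; linarith
  linarith [harmonic_le_one_add_log m]

/-- Claim 5.2: if `b : edges → ℝ≥0` on a graph on `[n]` with at most `n²/4`
edges satisfies `∑_{e∈F} b(e) ≤ Cq` for every forest `F` of the graph, then
`∑_e b(e)² ≤ C' q² log n` for a constant `C'` depending only on `C`. -/
theorem stmt_18 (C : ℝ) (hC : 0 < C) :
    ∃ C' : ℝ, 0 < C' ∧
      ∀ (n : ℕ), 2 ≤ n → ∀ (G : SimpleGraph (Fin n)) (b : Sym2 (Fin n) → ℝ)
        (q : ℝ), 0 ≤ q → (∀ e, 0 ≤ b e) →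
        G.edgeSet.ncard ≤ n^2 / 4 →
        (∀ F : SimpleGraph (Fin n), F ≤ G → F.IsAcyclic →
          ∑ e ∈ Finset.univ.filter (fun e => e ∈ F.edgeSet), b e ≤ C * q) →
        ∑ e ∈ Finset.univ.filter (fun e => e ∈ G.edgeSet), (b e)^2
          ≤ C' * q^2 * Real.log n := by
  refine ⟨2 * C ^ 2 * (2 + 1 / Real.log 2), by positivity, ?_⟩
  intro n hn G b q _ hb hE hF
  set E := univ.filter (· ∈ G.edgeSet)
  have hEG : (E : Set (Sym2 (Fin n))) = G.edgeSet := by simp [E]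
  have hcard : #E ≤ n ^ 2 := by
    rw [← Set.ncard_coe_finset, hEG]
    exact hE.trans (Nat.div_le_self _ _)
  have hlevel : ∀ e ∈ E, b e ^ 2 * #{e' ∈ E | b e ^ 2 ≤ b e' ^ 2} ≤ 2 * (C * q) ^ 2 :=
    fun e _ => SimpleGraph.sq_mul_card_le_of_forall_isAcyclic hF
      (hEG ▸ coe_subset.2 (filter_subset _ _)) (hb e)
      fun e' he' => (pow_le_pow_iff_left₀ (hb e) (hb e') two_ne_zero).1 (mem_filter.1 he').2
  calc ∑ e ∈ E, b e ^ 2 ≤ 2 * (C * q) ^ 2 * harmonic #E :=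
        sum_le_mul_harmonic_of_mul_card_le _ _ E (fun e _ => sq_nonneg _) hlevel
    _ ≤ 2 * (C * q) ^ 2 * ((2 + 1 / Real.log 2) * Real.log n) := by
        gcongr
        exact harmonic_le_mul_log_of_le_sq hn hcard
    _ = 2 * C ^ 2 * (2 + 1 / Real.log 2) * q ^ 2 * Real.log n := by ring
end
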